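/- Let G : ℝ³ → ℝ (or ℝ^{3×3}) be measurable with sup_x |x|² |G(x)| =: M < ∞. Then for every x ∈ ℝ³ with x ≠ 0, ∫_{ℝ³} |G(y)| / |x − y|² dy ≤ c M / |x|, where c is an absolute constant. -/

import Mathlib

/-!
Since `‖x‖ ≤ ‖x - y‖ + ‖y‖`, the larger of `‖x - y‖`, `‖y‖` is at least `R = ‖x‖ / 2`, so
`(‖x - y‖² ‖y‖²)⁻¹ ≤ ψ(‖x - y‖) + ψ(‖y‖)` with `ψ(t) = (t² max(R, t)²)⁻¹`. In dimension three the
radial integral of `ψ` is `3 |B₁| ∫₀^∞ max(R, t)⁻² dt = 6 |B₁| / R`, and by translation invariance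
both terms contribute the same, giving the kernel bound `24 |B₁| / ‖x‖`.
-/

open MeasureTheory Filter
open scoped Topology

noncomputable section

abbrev E3 := EuclideanSpace ℝ (Fin 3)

open Set Metric Module

lemma integral_Ioi_inv_max_sq {R : ℝ} (hR : 0 < R) :
    IntegrableOn (fun t : ℝ => (max R t ^ 2)⁻¹) (Ioi 0) ∧
      ∫ t in Ioi 0, (max R t ^ 2)⁻¹ = 2 / R := by
  have hnear : EqOn (fun t : ℝ => (max R t ^ 2)⁻¹) (fun _ => (R ^ 2)⁻¹) (Ioc 0 R) :=
    fun t ht => by simp [max_eq_left ht.2]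
  have hfar : EqOn (fun t : ℝ => (max R t ^ 2)⁻¹) (fun t => t ^ (-2 : ℝ)) (Ioi R) :=
    fun t (ht : R < t) => by simp [max_eq_right ht.le, Real.rpow_neg (hR.trans ht).le]
  have hint_near : IntegrableOn (fun t : ℝ => (max R t ^ 2)⁻¹) (Ioc 0 R) :=
    (integrableOn_congr_fun hnear measurableSet_Ioc).2 (integrableOn_const (by simp))
  have hint_far : IntegrableOn (fun t : ℝ => (max R t ^ 2)⁻¹) (Ioi R) :=
    (integrableOn_congr_fun hfar measurableSet_Ioi).2
      (integrableOn_Ioi_rpow_of_lt (by norm_num) hR)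
  rw [← Ioc_union_Ioi_eq_Ioi hR.le]
  refine ⟨hint_near.union hint_far, ?_⟩
  rw [setIntegral_union (Ioc_disjoint_Ioi le_rfl) measurableSet_Ioi hint_near hint_far,
    setIntegral_congr_fun measurableSet_Ioc hnear, setIntegral_congr_fun measurableSet_Ioi hfar,
    setIntegral_const, integral_Ioi_rpow_of_lt (by norm_num) hR]
  norm_num [hR.le, Real.rpow_neg_one]
  field_simp
  ring

lemma inv_sq_mul_inv_sq_le {a b R : ℝ} (ha : 0 ≤ a) (hb : 0 ≤ b) (hab : 2 * R ≤ a + b) :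
    (a ^ 2 * b ^ 2)⁻¹ ≤ (a ^ 2 * max R a ^ 2)⁻¹ + (b ^ 2 * max R b ^ 2)⁻¹ := by
  wlog hba : b ≤ a generalizing a b
  · have := this hb ha (by linarith) (le_of_not_ge hba)
    rwa [mul_comm, add_comm]
  rcases hb.eq_or_lt with rfl | hb_pos
  · norm_num
    positivity
  have hmax : max R b ≤ a := max_le (by linarith) hba
  have hmax_pos : 0 < max R b := hb_pos.trans_le (le_max_right R b)
  calc (a ^ 2 * b ^ 2)⁻¹ ≤ (b ^ 2 * max R b ^ 2)⁻¹ := by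
        rw [mul_comm (a ^ 2)]
        gcongr
    _ ≤ _ := le_add_of_nonneg_left (by positivity)

variable {E : Type*} [NormedAddCommGroup E] [NormedSpace ℝ E] [FiniteDimensional ℝ E]
  [MeasurableSpace E] [BorelSpace E] (μ : Measure E) [μ.IsAddHaarMeasure]

lemma integral_inv_sq_mul_max_sq_norm (hE : finrank ℝ E = 3) {R : ℝ} (hR : 0 < R) :
    Integrable (fun z : E => (‖z‖ ^ 2 * max R ‖z‖ ^ 2)⁻¹) μ ∧
      ∫ z, (‖z‖ ^ 2 * max R ‖z‖ ^ 2)⁻¹ ∂μ = 6 * μ.real (ball 0 1) / R := by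
  have : Nontrivial E := Module.nontrivial_of_finrank_pos (R := ℝ) (by omega)
  have hradial : EqOn (fun t : ℝ => t ^ (finrank ℝ E - 1) • (t ^ 2 * max R t ^ 2)⁻¹)
      (fun t => (max R t ^ 2)⁻¹) (Ioi 0) := fun t (ht : 0 < t) => by
    simp only [hE, smul_eq_mul, mul_inv]
    field_simp
  obtain ⟨hint, hval⟩ := integral_Ioi_inv_max_sq hR
  refine ⟨(integrable_fun_norm_addHaar μ).2
    ((integrableOn_congr_fun hradial measurableSet_Ioi).2 hint), ?_⟩
  rw [integral_fun_norm_addHaar μ (fun t => (t ^ 2 * max R t ^ 2)⁻¹),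
    setIntegral_congr_fun measurableSet_Ioi hradial, hval, hE]
  simp only [nsmul_eq_mul, smul_eq_mul]
  ring

lemma integral_inv_sq_norm_sub_mul_inv_sq_norm_le (hE : finrank ℝ E = 3) {x : E} (hx : x ≠ 0) :
    Integrable (fun y => (‖x - y‖ ^ 2 * ‖y‖ ^ 2)⁻¹) μ ∧
      ∫ y, (‖x - y‖ ^ 2 * ‖y‖ ^ 2)⁻¹ ∂μ ≤ 24 * μ.real (ball 0 1) / ‖x‖ := by
  set R := ‖x‖ / 2 with hR_def
  have hR : 0 < R := by positivity
  obtain ⟨hint, hval⟩ := integral_inv_sq_mul_max_sq_norm μ hE hR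
  have hint_sub : Integrable (fun y => (‖x - y‖ ^ 2 * max R ‖x - y‖ ^ 2)⁻¹) μ := by
    simpa only [norm_sub_rev x] using hint.comp_sub_right x
  have hval_sub : ∫ y, (‖x - y‖ ^ 2 * max R ‖x - y‖ ^ 2)⁻¹ ∂μ = 6 * μ.real (ball 0 1) / R := by
    simpa only [norm_sub_rev x] using
      (integral_sub_right_eq_self (fun z => (‖z‖ ^ 2 * max R ‖z‖ ^ 2)⁻¹) x).trans hval
  have hdom : ∀ y, (‖x - y‖ ^ 2 * ‖y‖ ^ 2)⁻¹ ≤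
      (‖x - y‖ ^ 2 * max R ‖x - y‖ ^ 2)⁻¹ + (‖y‖ ^ 2 * max R ‖y‖ ^ 2)⁻¹ := fun y =>
    inv_sq_mul_inv_sq_le (norm_nonneg _) (norm_nonneg _)
      (by rw [hR_def]; linarith [norm_sub_norm_le x y])
  have hmeas : AEStronglyMeasurable (fun y => (‖x - y‖ ^ 2 * ‖y‖ ^ 2)⁻¹) μ := by fun_prop
  refine ⟨(hint_sub.add hint).mono' hmeas (ae_of_all _ fun y => ?_), ?_⟩
  · rw [Real.norm_of_nonneg (by positivity)]
    exact hdom y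
  calc ∫ y, (‖x - y‖ ^ 2 * ‖y‖ ^ 2)⁻¹ ∂μ
      ≤ ∫ y, (‖x - y‖ ^ 2 * max R ‖x - y‖ ^ 2)⁻¹ + (‖y‖ ^ 2 * max R ‖y‖ ^ 2)⁻¹ ∂μ :=
        integral_mono_of_nonneg (ae_of_all _ fun y => by positivity) (hint_sub.add hint)
          (ae_of_all _ hdom)
    _ = 24 * μ.real (ball 0 1) / ‖x‖ := by
        rw [integral_add hint_sub hint, hval_sub, hval]
        ring

/-- Potential estimate: if `|x|² |G(x)| ≤ M`, then
`∫ |G(y)|/|x−y|² dy ≤ c M / |x|` for an absolute constant `c`. -/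
theorem stmt5 : ∃ c : ℝ, 0 < c ∧ ∀ (G : E3 → ℝ) (M : ℝ), Measurable G →
    (∀ x : E3, ‖x‖ ^ 2 * |G x| ≤ M) →
    ∀ x : E3, x ≠ 0 → (∫ y : E3, |G y| / ‖x - y‖ ^ 2) ≤ c * M / ‖x‖ := by
  have hball : 0 < volume.real (ball (0 : E3) 1) :=
    ENNReal.toReal_pos (measure_ball_pos _ _ one_pos).ne' measure_ball_lt_top.ne
  refine ⟨24 * volume.real (ball (0 : E3) 1), by positivity, ?_⟩
  intro G M _ hG x hx
  have hM : 0 ≤ M := by simpa using hG 0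
  obtain ⟨hint, hle⟩ :=
    integral_inv_sq_norm_sub_mul_inv_sq_norm_le volume finrank_euclideanSpace_fin hx
  have hpointwise : ∀ y ≠ 0, |G y| / ‖x - y‖ ^ 2 ≤ M * (‖x - y‖ ^ 2 * ‖y‖ ^ 2)⁻¹ := by
    intro y hy
    have hGy : |G y| ≤ M / ‖y‖ ^ 2 := by
      rw [le_div_iff₀ (by positivity), mul_comm]
      exact hG y
    calc |G y| / ‖x - y‖ ^ 2 ≤ M / ‖y‖ ^ 2 / ‖x - y‖ ^ 2 := by gcongr
      _ = M * (‖x - y‖ ^ 2 * ‖y‖ ^ 2)⁻¹ := by ring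
  calc ∫ y, |G y| / ‖x - y‖ ^ 2
      ≤ ∫ y, M * (‖x - y‖ ^ 2 * ‖y‖ ^ 2)⁻¹ :=
        integral_mono_of_nonneg (ae_of_all _ fun y => by positivity) (hint.const_mul M)
          ((Measure.ae_ne volume 0).mono hpointwise)
    _ = M * ∫ y, (‖x - y‖ ^ 2 * ‖y‖ ^ 2)⁻¹ := integral_const_mul M _
    _ ≤ M * (24 * volume.real (ball (0 : E3) 1) / ‖x‖) := by gcongr
    _ = 24 * volume.real (ball (0 : E3) 1) * M / ‖x‖ := by ring
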